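/- arXiv:2404.11191 — 3 statements merged into one kernel-verified Lean document; each statement's English description precedes it below -/
import Mathlib

section
/- If K is a Volterra kernel on J = [0,τ] with K ∈ L^∞(J², ℝ^{d×d}), then K has a resolvent R on J which is a Volterra kernel of type L¹ and of type L^∞ on J, i.e., R is measurable, R(t,σ) = 0 for σ > t, R satisfies the resolvent equations, and both esssup_{σ∈J} ∫_J |R(t,σ)| dt < +∞ and esssup_{t∈J} ∫_J |R(t,σ)| dσ < +∞. -/
/-!
The resolvent is the Neumann series `R = ∑ (-1)ⁿ Kₙ` of the iterated kernels `K₀ = K`,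
`Kₙ₊₁(t, σ) = ∫ K(t, ρ) Kₙ(ρ, σ) dρ`. Since all `Kₙ` vanish above the diagonal, only
`ρ ∈ [σ, t]` contributes to this integral, and induction gives the factorial bound
`‖Kₙ(t, σ)‖ ≤ Mⁿ⁺¹ |t - σ|ⁿ / n!` when `‖K‖ ≤ M`. Hence the series converges absolutely with
`‖R(t, σ)‖ ≤ M e^{M |t - σ|}`, and summing `K ⋆ Kₙ = Kₙ₊₁ = Kₙ ⋆ K` (the second identity is
associativity of `⋆`, i.e. Fubini) term by term telescopes to both resolvent equations.
An `L^∞` kernel agrees a.e. on `J²` with a truncation that is bounded everywhere, and the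
resolvent equations are insensitive to changing `K` on a null set of `J²`.
-/

open MeasureTheory Set Filter

noncomputable section

/-- `ℝ^d` with the Euclidean norm. -/
abbrev Evec (d : ℕ) := EuclideanSpace ℝ (Fin d)

/-- `ℝ^{d×d}`, identified with linear operators on `ℝ^d`, with a fixed norm. -/
abbrev Mtx (d : ℕ) := Evec d →L[ℝ] Evec d

open Function Real
open scoped Nat

theorem integral_Icc_sub_pow {a b : ℝ} (hab : a ≤ b) (n : ℕ) :
    ∫ x in Icc a b, (x - a) ^ n = (b - a) ^ (n + 1) / (n + 1) := by
  rw [integral_Icc_eq_integral_Ioc, ← intervalIntegral.integral_of_le hab,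
    intervalIntegral.integral_comp_sub_right (· ^ n), integral_pow]
  simp

theorem hasSum_pow_succ_div_factorial_mul (M x : ℝ) :
    HasSum (fun n : ℕ => M ^ (n + 1) / n ! * x ^ n) (M * exp (M * x)) := by
  have h : (fun n : ℕ => M ^ (n + 1) / n ! * x ^ n) = fun n => M * ((M * x) ^ n / n !) := by
    ext n
    ring
  rw [h, exp_eq_exp_ℝ]
  exact (NormedSpace.expSeries_div_hasSum_exp (M * x)).mul_left M

theorem integral_tsum_of_norm_le {α E : Type*} [MeasurableSpace α] [NormedAddCommGroup E]
    [NormedSpace ℝ E] {μ : Measure α} [IsFiniteMeasure μ] {F : ℕ → α → E} {c : ℕ → ℝ}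
    (hF : ∀ n, AEStronglyMeasurable (F n) μ) (hFc : ∀ n x, ‖F n x‖ ≤ c n) (hc : Summable c) :
    ∫ x, ∑' n, F n x ∂μ = ∑' n, ∫ x, F n x ∂μ := by
  have hint n : Integrable (F n) μ := .of_bound (hF n) (c n) (ae_of_all _ (hFc n))
  refine (integral_tsum_of_summable_integral_norm hint ?_).symm
  refine .of_nonneg_of_le (fun n => integral_nonneg fun x => norm_nonneg _) (fun n => ?_)
    (hc.mul_right (μ.real univ))
  refine (le_abs_self _).trans ?_
  simpa using norm_integral_le_of_norm_le_const (μ := μ)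
    (ae_of_all _ fun x => (norm_norm (F n x)).trans_le (hFc n x))

theorem MeasureTheory.MemLp.exists_bounded_ae_eq {α E : Type*} [MeasurableSpace α]
    [NormedAddCommGroup E] {μ : Measure α} {f : α → E} (hfμ : MemLp f ⊤ μ)
    (hf : StronglyMeasurable f) :
    ∃ M, ∃ g : α → E, StronglyMeasurable g ∧ (∀ x, ‖g x‖ ≤ M) ∧ g =ᵐ[μ] f ∧
      support g ⊆ support f := by
  obtain ⟨M, hM0, hfM⟩ : ∃ M, 0 ≤ M ∧ ∀ᵐ x ∂μ, ‖f x‖ ≤ M :=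
    ⟨_, lpNorm_nonneg, ae_le_lpNorm_exponent_top hfμ⟩
  refine ⟨M, {x | ‖f x‖ ≤ M}.indicator f,
    hf.indicator (measurableSet_le hf.norm.measurable measurable_const), fun x => ?_, ?_,
    support_indicator.trans_subset inter_subset_right⟩
  · by_cases hx : ‖f x‖ ≤ M
    · simp [hx]
    · simp [hx, hM0]
  · filter_upwards [hfM] with x hx
    simp [hx]

namespace Volterra

def IsVolterra {A : Type*} [Zero A] (K : ℝ → ℝ → A) : Prop := ∀ t σ, t < σ → K t σ = 0

theorem IsVolterra.mul_eq_zero {A : Type*} [MulZeroClass A] {K L : ℝ → ℝ → A}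
    (hK : IsVolterra K) (hL : IsVolterra L) {t ρ σ : ℝ} (hρ : ρ ∉ Icc σ t) :
    K t ρ * L ρ σ = 0 := by
  rcases not_and_or.1 hρ with h | h
  · rw [hL ρ σ (not_le.1 h), mul_zero]
  · rw [hK t ρ (not_le.1 h), zero_mul]

structure IsBoundedVolterra {E : Type*} [NormedAddCommGroup E] (K : ℝ → ℝ → E) (M : ℝ) :
    Prop where
  isVolterra : IsVolterra K
  stronglyMeasurable : StronglyMeasurable (uncurry K)
  norm_le : ∀ t σ, ‖K t σ‖ ≤ M

theorem IsBoundedVolterra.nonneg {E : Type*} [NormedAddCommGroup E] {K : ℝ → ℝ → E} {M : ℝ}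
    (hK : IsBoundedVolterra K M) : 0 ≤ M :=
  (norm_nonneg _).trans (hK.norm_le 0 0)

variable {A : Type*} [NormedRing A] {K L N : ℝ → ℝ → A}

theorem norm_mul_le_of_isVolterra (hK : IsVolterra K) (hL : IsVolterra L) {a b : ℝ} {i j : ℕ}
    (hKb : ∀ x y, ‖K x y‖ ≤ a * |x - y| ^ i) (hLb : ∀ x y, ‖L x y‖ ≤ b * |x - y| ^ j)
    (ha : 0 ≤ a) (hb : 0 ≤ b) (t ρ σ : ℝ) :
    ‖K t ρ * L ρ σ‖ ≤ a * b * |t - σ| ^ (i + j) := by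
  by_cases hρ : ρ ∈ Icc σ t
  · obtain ⟨hσρ, hρt⟩ := hρ
    have htρ : |t - ρ| ≤ |t - σ| := abs_le_abs (by linarith) (by linarith)
    have hρσ : |ρ - σ| ≤ |t - σ| := abs_le_abs (by linarith) (by linarith)
    calc ‖K t ρ * L ρ σ‖ ≤ ‖K t ρ‖ * ‖L ρ σ‖ := norm_mul_le _ _
      _ ≤ (a * |t - σ| ^ i) * (b * |t - σ| ^ j) := by
        gcongr
        · exact (hKb t ρ).trans (by gcongr)
        · exact (hLb ρ σ).trans (by gcongr)
      _ = a * b * |t - σ| ^ (i + j) := by ring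
  · rw [hK.mul_eq_zero hL hρ, norm_zero]
    positivity

theorem norm_mul_mul_le_of_isVolterra (hK : IsVolterra K) (hL : IsVolterra L) (hN : IsVolterra N)
    {a b c : ℝ} {i j k : ℕ} (hKb : ∀ x y, ‖K x y‖ ≤ a * |x - y| ^ i)
    (hLb : ∀ x y, ‖L x y‖ ≤ b * |x - y| ^ j) (hNb : ∀ x y, ‖N x y‖ ≤ c * |x - y| ^ k)
    (ha : 0 ≤ a) (hb : 0 ≤ b) (hc : 0 ≤ c) (t ρ u σ : ℝ) :
    ‖K t ρ * L ρ u * N u σ‖ ≤ a * b * c * |t - σ| ^ (i + j + k) :=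
  -- for fixed `ρ`, `(x, y) ↦ K x ρ * L ρ y` is again a Volterra kernel
  norm_mul_le_of_isVolterra (K := fun x y => K x ρ * L ρ y)
    (fun _ _ h => hK.mul_eq_zero hL fun hρ => (hρ.1.trans hρ.2).not_gt h) hN
    (norm_mul_le_of_isVolterra hK hL hKb hLb ha hb · ρ ·) hNb (mul_nonneg ha hb) hc t u σ

variable [NormedAlgebra ℝ A] (μ : Measure ℝ)

def comp (K L : ℝ → ℝ → A) (t σ : ℝ) : A := ∫ ρ, K t ρ * L ρ σ ∂μ

def iterate (K : ℝ → ℝ → A) : ℕ → ℝ → ℝ → A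
  | 0 => K
  | n + 1 => comp μ K (iterate K n)

def resolvent (K : ℝ → ℝ → A) (t σ : ℝ) : A := ∑' n : ℕ, (-1 : ℝ) ^ n • iterate μ K n t σ

def IsResolvent (K R : ℝ → ℝ → A) : Prop :=
  ∀ᵐ q ∂μ.prod μ, K q.1 q.2 = R q.1 q.2 + comp μ K R q.1 q.2 ∧
    K q.1 q.2 = R q.1 q.2 + comp μ R K q.1 q.2

variable {μ}

theorem IsVolterra.comp (hK : IsVolterra K) (hL : IsVolterra L) : IsVolterra (comp μ K L) := by
  intro t σ h
  have hz ρ : K t ρ * L ρ σ = 0 := hK.mul_eq_zero hL fun hρ => (hρ.1.trans hρ.2).not_gt h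
  simp [Volterra.comp, hz]

theorem IsVolterra.iterate (hK : IsVolterra K) : ∀ n, IsVolterra (iterate μ K n)
  | 0 => hK
  | n + 1 => hK.comp (hK.iterate n)

theorem stronglyMeasurable_comp [SFinite μ] (hK : StronglyMeasurable (uncurry K))
    (hL : StronglyMeasurable (uncurry L)) : StronglyMeasurable (uncurry (comp μ K L)) :=
  ((hK.comp_measurable (measurable_fst.fst.prodMk measurable_snd)).mul
    (hL.comp_measurable (measurable_snd.prodMk measurable_fst.snd))).integral_prod_right'

theorem stronglyMeasurable_iterate [SFinite μ] (hK : StronglyMeasurable (uncurry K)) :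
    ∀ n, StronglyMeasurable (uncurry (iterate μ K n))
  | 0 => hK
  | n + 1 => stronglyMeasurable_comp hK (stronglyMeasurable_iterate hK n)

theorem comp_comp_apply [SFinite μ] {t σ : ℝ} (hKL : ∀ u, Integrable (fun ρ => K t ρ * L ρ u) μ)
    (hLN : ∀ ρ, Integrable (fun u => L ρ u * N u σ) μ)
    (hKLN : Integrable (fun p : ℝ × ℝ => K t p.1 * L p.1 p.2 * N p.2 σ) (μ.prod μ)) :
    comp μ (comp μ K L) N t σ = comp μ K (comp μ L N) t σ := by
  symm
  calc ∫ ρ, K t ρ * ∫ u, L ρ u * N u σ ∂μ ∂μ = ∫ ρ, ∫ u, K t ρ * L ρ u * N u σ ∂μ ∂μ := by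
        refine integral_congr_ae (ae_of_all _ fun ρ => ?_)
        simp only [mul_assoc]
        exact (integral_const_mul_of_integrable (hLN ρ)).symm
    _ = ∫ u, ∫ ρ, K t ρ * L ρ u * N u σ ∂μ ∂μ := integral_integral_swap hKLN
    _ = ∫ u, (∫ ρ, K t ρ * L ρ u ∂μ) * N u σ ∂μ :=
        integral_congr_ae (ae_of_all _ fun u => integral_mul_const_of_integrable (hKL u))

theorem IsVolterra.resolvent (hK : IsVolterra K) : IsVolterra (resolvent μ K) := by
  intro t σ h
  simp [Volterra.resolvent, hK.iterate _ t σ h]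

namespace IsBoundedVolterra

variable {M : ℝ}

theorem norm_iterate_le (hK : IsBoundedVolterra K M) (hμ : μ ≤ volume) (n : ℕ) (t σ : ℝ) :
    ‖iterate μ K n t σ‖ ≤ M ^ (n + 1) / n ! * |t - σ| ^ n := by
  induction n generalizing t σ with
  | zero => simpa [iterate] using hK.norm_le t σ
  | succ n ih =>
    have hM := hK.nonneg
    rcases lt_or_ge t σ with hts | hst
    · rw [hK.isVolterra.iterate (n + 1) t σ hts, norm_zero]
      positivity
    set g := (Icc σ t).indicator fun ρ => M * (M ^ (n + 1) / n ! * (ρ - σ) ^ n) with hg_def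
    have hg : Integrable g :=
      (Continuous.integrableOn_Icc (by fun_prop)).integrable_indicator measurableSet_Icc
    have hbound ρ : ‖K t ρ * iterate μ K n ρ σ‖ ≤ g ρ := by
      by_cases hρ : ρ ∈ Icc σ t
      · rw [hg_def, indicator_of_mem hρ]
        refine (norm_mul_le _ _).trans (mul_le_mul (hK.norm_le t ρ) ?_ (norm_nonneg _) hM)
        simpa only [abs_of_nonneg (sub_nonneg.2 hρ.1)] using ih ρ σ
      · rw [hg_def, indicator_of_notMem hρ,
          hK.isVolterra.mul_eq_zero (hK.isVolterra.iterate n) hρ, norm_zero]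
    calc ‖iterate μ K (n + 1) t σ‖ ≤ ∫ ρ, g ρ ∂μ :=
          norm_integral_le_of_norm_le (hg.mono_measure hμ) (ae_of_all _ hbound)
      _ ≤ ∫ ρ, g ρ :=
          integral_mono_measure hμ (ae_of_all _ fun ρ => (norm_nonneg _).trans (hbound ρ)) hg
      _ = M ^ (n + 1 + 1) / (n + 1)! * |t - σ| ^ (n + 1) := by
        rw [integral_indicator measurableSet_Icc, integral_const_mul, integral_const_mul,
          integral_Icc_sub_pow hst, abs_of_nonneg (sub_nonneg.2 hst), Nat.factorial_succ]
        push_cast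
        field_simp
        ring

theorem norm_mul_iterate_le (hK : IsBoundedVolterra K M) (hμ : μ ≤ volume) (n : ℕ)
    (t ρ σ : ℝ) : ‖K t ρ * iterate μ K n ρ σ‖ ≤ M * (M ^ (n + 1) / n ! * |t - σ| ^ n) := by
  have hM := hK.nonneg
  have := norm_mul_le_of_isVolterra hK.isVolterra (hK.isVolterra.iterate n) (i := 0)
    (by simpa using hK.norm_le) (hK.norm_iterate_le hμ n) hM (by positivity) t ρ σ
  rwa [zero_add, mul_assoc] at this

theorem norm_iterate_mul_le (hK : IsBoundedVolterra K M) (hμ : μ ≤ volume) (n : ℕ)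
    (t ρ σ : ℝ) : ‖iterate μ K n t ρ * K ρ σ‖ ≤ M * (M ^ (n + 1) / n ! * |t - σ| ^ n) := by
  have hM := hK.nonneg
  have := norm_mul_le_of_isVolterra (hK.isVolterra.iterate n) hK.isVolterra (j := 0)
    (hK.norm_iterate_le hμ n) (by simpa using hK.norm_le) (by positivity) hM t ρ σ
  rwa [add_zero, mul_comm _ M, mul_assoc] at this

theorem integrable_mul_iterate [IsFiniteMeasure μ] (hK : IsBoundedVolterra K M)
    (hμ : μ ≤ volume) (n : ℕ) (t σ : ℝ) : Integrable (fun ρ => K t ρ * iterate μ K n ρ σ) μ :=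
  .of_bound ((hK.stronglyMeasurable.comp_measurable measurable_prodMk_left).mul
      ((stronglyMeasurable_iterate hK.stronglyMeasurable n).comp_measurable
        measurable_prodMk_right)).aestronglyMeasurable
    _ (ae_of_all _ (hK.norm_mul_iterate_le hμ n t · σ))

theorem integrable_iterate_mul [IsFiniteMeasure μ] (hK : IsBoundedVolterra K M)
    (hμ : μ ≤ volume) (n : ℕ) (t σ : ℝ) : Integrable (fun ρ => iterate μ K n t ρ * K ρ σ) μ :=
  .of_bound (((stronglyMeasurable_iterate hK.stronglyMeasurable n).comp_measurable
        measurable_prodMk_left).mul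
      (hK.stronglyMeasurable.comp_measurable measurable_prodMk_right)).aestronglyMeasurable
    _ (ae_of_all _ (hK.norm_iterate_mul_le hμ n t · σ))

theorem integrable_mul_iterate_mul [IsFiniteMeasure μ] (hK : IsBoundedVolterra K M)
    (hμ : μ ≤ volume) (n : ℕ) (t σ : ℝ) :
    Integrable (fun p : ℝ × ℝ => K t p.1 * iterate μ K n p.1 p.2 * K p.2 σ) (μ.prod μ) := by
  have hM := hK.nonneg
  refine .of_bound ((((hK.stronglyMeasurable.comp_measurable
      (measurable_const.prodMk measurable_fst)).mul
      (stronglyMeasurable_iterate hK.stronglyMeasurable n)).mul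
      (hK.stronglyMeasurable.comp_measurable
        (measurable_snd.prodMk measurable_const))).aestronglyMeasurable)
    (M * (M ^ (n + 1) / n !) * M * |t - σ| ^ n) (ae_of_all _ fun p => ?_)
  have := norm_mul_mul_le_of_isVolterra hK.isVolterra (hK.isVolterra.iterate n) hK.isVolterra
    (i := 0) (k := 0) (by simpa using hK.norm_le) (hK.norm_iterate_le hμ n)
    (by simpa using hK.norm_le) hM (by positivity) hM t p.1 p.2 σ
  rwa [zero_add, add_zero] at this

theorem comp_iterate [IsFiniteMeasure μ] (hK : IsBoundedVolterra K M) (hμ : μ ≤ volume) :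
    ∀ n, comp μ (iterate μ K n) K = iterate μ K (n + 1)
  | 0 => rfl
  | n + 1 => by
    ext t σ
    change comp μ (comp μ K (iterate μ K n)) K t σ = comp μ K (iterate μ K (n + 1)) t σ
    rw [comp_comp_apply (hK.integrable_mul_iterate hμ n t) (hK.integrable_iterate_mul hμ n · σ)
      (hK.integrable_mul_iterate_mul hμ n t σ), hK.comp_iterate hμ n]

theorem summable_norm_iterate (hK : IsBoundedVolterra K M) (hμ : μ ≤ volume) (t σ : ℝ) :
    Summable fun n => ‖iterate μ K n t σ‖ :=
  .of_nonneg_of_le (fun _ => norm_nonneg _) (hK.norm_iterate_le hμ · t σ)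
    (hasSum_pow_succ_div_factorial_mul M |t - σ|).summable

theorem norm_resolvent_le (hK : IsBoundedVolterra K M) (hμ : μ ≤ volume) (t σ : ℝ) :
    ‖resolvent μ K t σ‖ ≤ M * exp (M * |t - σ|) := by
  have hs : Summable fun n => ‖(-1 : ℝ) ^ n • iterate μ K n t σ‖ := by
    simpa [norm_smul] using hK.summable_norm_iterate hμ t σ
  refine (norm_tsum_le_tsum_norm hs).trans
    (hasSum_le (fun n => ?_) hs.hasSum (hasSum_pow_succ_div_factorial_mul M |t - σ|))
  simpa [norm_smul] using hK.norm_iterate_le hμ n t σ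

variable [CompleteSpace A]

theorem summable_resolvent (hK : IsBoundedVolterra K M) (hμ : μ ≤ volume) (t σ : ℝ) :
    Summable fun n => (-1 : ℝ) ^ n • iterate μ K n t σ :=
  .of_norm (by simpa [norm_smul] using hK.summable_norm_iterate hμ t σ)

theorem stronglyMeasurable_resolvent [SFinite μ] (hK : IsBoundedVolterra K M)
    (hμ : μ ≤ volume) : StronglyMeasurable (uncurry (resolvent μ K)) := by
  refine stronglyMeasurable_of_tendsto atTop
    (f := fun N p => ∑ n ∈ Finset.range N, (-1 : ℝ) ^ n • uncurry (iterate μ K n) p)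
    (fun N => Finset.stronglyMeasurable_fun_sum _ fun n _ =>
      (stronglyMeasurable_iterate hK.stronglyMeasurable n).const_smul _) ?_
  exact tendsto_pi_nhds.2 fun p => (hK.summable_resolvent hμ p.1 p.2).hasSum.tendsto_sum_nat

theorem comp_resolvent [IsFiniteMeasure μ] (hK : IsBoundedVolterra K M) (hμ : μ ≤ volume)
    (t σ : ℝ) : comp μ K (resolvent μ K) t σ = ∑' n, (-1 : ℝ) ^ n • iterate μ K (n + 1) t σ := by
  have hpt ρ : K t ρ * resolvent μ K ρ σ =
      ∑' n, (-1 : ℝ) ^ n • (K t ρ * iterate μ K n ρ σ) := by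
    simp_rw [resolvent, ← (hK.summable_resolvent hμ ρ σ).tsum_mul_left, mul_smul_comm]
  calc comp μ K (resolvent μ K) t σ
      = ∫ ρ, ∑' n, (-1 : ℝ) ^ n • (K t ρ * iterate μ K n ρ σ) ∂μ :=
        integral_congr_ae (ae_of_all _ hpt)
    _ = ∑' n, ∫ ρ, (-1 : ℝ) ^ n • (K t ρ * iterate μ K n ρ σ) ∂μ :=
        integral_tsum_of_norm_le
          (fun n => (hK.integrable_mul_iterate hμ n t σ).aestronglyMeasurable.const_smul _)
          (fun n ρ => by simpa [norm_smul] using hK.norm_mul_iterate_le hμ n t ρ σ)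
          ((hasSum_pow_succ_div_factorial_mul M |t - σ|).summable.mul_left M)
    _ = _ := by simp_rw [integral_smul]; rfl

theorem resolvent_comp [IsFiniteMeasure μ] (hK : IsBoundedVolterra K M) (hμ : μ ≤ volume)
    (t σ : ℝ) : comp μ (resolvent μ K) K t σ = ∑' n, (-1 : ℝ) ^ n • iterate μ K (n + 1) t σ := by
  have hpt ρ : resolvent μ K t ρ * K ρ σ =
      ∑' n, (-1 : ℝ) ^ n • (iterate μ K n t ρ * K ρ σ) := by
    simp_rw [resolvent, ← (hK.summable_resolvent hμ t ρ).tsum_mul_right, smul_mul_assoc]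
  calc comp μ (resolvent μ K) K t σ
      = ∫ ρ, ∑' n, (-1 : ℝ) ^ n • (iterate μ K n t ρ * K ρ σ) ∂μ :=
        integral_congr_ae (ae_of_all _ hpt)
    _ = ∑' n, ∫ ρ, (-1 : ℝ) ^ n • (iterate μ K n t ρ * K ρ σ) ∂μ :=
        integral_tsum_of_norm_le
          (fun n => (hK.integrable_iterate_mul hμ n t σ).aestronglyMeasurable.const_smul _)
          (fun n ρ => by simpa [norm_smul] using hK.norm_iterate_mul_le hμ n t ρ σ)
          ((hasSum_pow_succ_div_factorial_mul M |t - σ|).summable.mul_left M)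
    _ = ∑' n, (-1 : ℝ) ^ n • comp μ (iterate μ K n) K t σ := by simp_rw [integral_smul]; rfl
    _ = _ := by simp_rw [hK.comp_iterate hμ]

theorem resolvent_add_tsum_iterate_succ (hK : IsBoundedVolterra K M) (hμ : μ ≤ volume)
    (t σ : ℝ) : resolvent μ K t σ + ∑' n, (-1 : ℝ) ^ n • iterate μ K (n + 1) t σ = K t σ := by
  rw [resolvent, (hK.summable_resolvent hμ t σ).tsum_eq_zero_add]
  simp [pow_succ, tsum_neg, iterate]

theorem isResolvent_resolvent [IsFiniteMeasure μ] (hK : IsBoundedVolterra K M)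
    (hμ : μ ≤ volume) : IsResolvent μ K (resolvent μ K) :=
  ae_of_all _ fun q => by
    rw [hK.comp_resolvent hμ, hK.resolvent_comp hμ, hK.resolvent_add_tsum_iterate_succ hμ]
    exact ⟨rfl, rfl⟩

end IsBoundedVolterra

theorem IsResolvent.congr_ae [SFinite μ] {R : ℝ → ℝ → A} (h : IsResolvent μ K R)
    (hKL : uncurry K =ᵐ[μ.prod μ] uncurry L) : IsResolvent μ L R := by
  have h₁ : ∀ᵐ t ∂μ, ∀ᵐ ρ ∂μ, K t ρ = L t ρ := Measure.ae_ae_of_ae_prod hKL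
  have h₂ : ∀ᵐ σ ∂μ, ∀ᵐ ρ ∂μ, K ρ σ = L ρ σ := Measure.ae_ae_of_ae_prod
    (Measure.measurePreserving_swap.quasiMeasurePreserving.ae_eq_comp hKL)
  filter_upwards [h, hKL, Measure.quasiMeasurePreserving_fst.ae h₁,
    Measure.quasiMeasurePreserving_snd.ae h₂] with q hq hKLq hq₁ hq₂
  have e₁ : comp μ K R q.1 q.2 = comp μ L R q.1 q.2 :=
    integral_congr_ae (hq₁.mono fun ρ hρ => by simp only [hρ])
  have e₂ : comp μ R K q.1 q.2 = comp μ R L q.1 q.2 :=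
    integral_congr_ae (hq₂.mono fun ρ hρ => by simp only [hρ])
  rw [← e₁, ← e₂, ← show K q.1 q.2 = L q.1 q.2 from hKLq]
  exact hq

end Volterra

theorem resolvent_exists_general
    (d : ℕ) (τ : ℝ)
    (K : ℝ → ℝ → Mtx d)
    (hKmeas : StronglyMeasurable (Function.uncurry K))
    (hKvolterra : ∀ t σ : ℝ, t < σ → K t σ = 0)
    (hKbdd : MemLp (Function.uncurry K) ⊤
      (volume.restrict (Set.Icc (0:ℝ) τ ×ˢ Set.Icc (0:ℝ) τ))) :
    ∃ R : ℝ → ℝ → Mtx d,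
      StronglyMeasurable (Function.uncurry R) ∧
      (∀ t σ : ℝ, t < σ → R t σ = 0) ∧
      (∀ᵐ q ∂(volume.restrict (Set.Icc (0:ℝ) τ ×ˢ Set.Icc (0:ℝ) τ)),
        K q.1 q.2 = R q.1 q.2 + ∫ ρ in Set.Icc (0:ℝ) τ, (K q.1 ρ).comp (R ρ q.2) ∧
        K q.1 q.2 = R q.1 q.2 + ∫ ρ in Set.Icc (0:ℝ) τ, (R q.1 ρ).comp (K ρ q.2)) ∧
      (∃ c : ℝ, ∀ᵐ σ ∂(volume.restrict (Set.Icc (0:ℝ) τ)),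
        (∫ t in Set.Icc (0:ℝ) τ, ‖R t σ‖) ≤ c) ∧
      (∃ c : ℝ, ∀ᵐ t ∂(volume.restrict (Set.Icc (0:ℝ) τ)),
        (∫ σ in Set.Icc (0:ℝ) τ, ‖R t σ‖) ≤ c) := by
  set μ := volume.restrict (Icc (0 : ℝ) τ)
  have hμ : μ ≤ volume := Measure.restrict_le_self
  have hμμ : volume.restrict (Icc (0 : ℝ) τ ×ˢ Icc 0 τ) = μ.prod μ := by
    rw [Measure.prod_restrict, ← Measure.volume_eq_prod]
  rw [hμμ] at hKbdd ⊢
  obtain ⟨M, K', hK'meas, hK'M, hK'K, hK'supp⟩ := hKbdd.exists_bounded_ae_eq hKmeas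
  rw [← uncurry_curry K'] at hK'meas hK'K
  have hK' : Volterra.IsBoundedVolterra (curry K') M :=
    ⟨fun t σ h => not_not.1 fun hne => hK'supp hne (hKvolterra t σ h), hK'meas,
      fun t σ => hK'M (t, σ)⟩
  set R := Volterra.resolvent μ (curry K')
  have hR t σ (ht : t ∈ Icc 0 τ) (hσ : σ ∈ Icc 0 τ) : ‖R t σ‖ ≤ M * exp (M * τ) := by
    have := hK'.nonneg
    refine (hK'.norm_resolvent_le hμ t σ).trans ?_
    gcongr
    exact abs_sub_le_iff.2 ⟨by linarith [ht.2, hσ.1], by linarith [ht.1, hσ.2]⟩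
  refine ⟨R, hK'.stronglyMeasurable_resolvent hμ, hK'.isVolterra.resolvent,
    (hK'.isResolvent_resolvent hμ).congr_ae hK'K, ⟨M * exp (M * τ) * volume.real (Icc 0 τ), ?_⟩,
    ⟨M * exp (M * τ) * volume.real (Icc 0 τ), ?_⟩⟩
  · filter_upwards [ae_restrict_mem measurableSet_Icc] with σ hσ
    exact (Real.le_norm_self _).trans (norm_setIntegral_le_of_norm_le_const measure_Icc_lt_top
      fun t ht => (norm_norm _).trans_le (hR t σ ht hσ))
  · filter_upwards [ae_restrict_mem measurableSet_Icc] with t ht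
    exact (Real.le_norm_self _).trans (norm_setIntegral_le_of_norm_le_const measure_Icc_lt_top
      fun σ hσ => (norm_norm _).trans_le (hR t σ ht hσ))

/-- If `K` is a Volterra kernel on `J = [0,τ]` with `K ∈ L^∞(J², ℝ^{d×d})`,
then `K` has a resolvent `R` on `J` which is a Volterra kernel of type `L¹` and of type `L^∞`
on `J`, i.e., `R` is measurable, `R(t,σ) = 0` for `σ > t`, `R` satisfies the resolvent
equations, and both `esssup_{σ∈J} ∫_J |R(t,σ)| dt < +∞` and
`esssup_{t∈J} ∫_J |R(t,σ)| dσ < +∞`. -/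
theorem resolvent_exists
    (d : ℕ) (hd : 0 < d) (τ : ℝ) (hτ : 0 < τ)
    (K : ℝ → ℝ → Mtx d)
    (hKmeas : StronglyMeasurable (Function.uncurry K))
    (hKvolterra : ∀ t σ : ℝ, t < σ → K t σ = 0)
    (hKbdd : MemLp (Function.uncurry K) ⊤
      (volume.restrict (Set.Icc (0:ℝ) τ ×ˢ Set.Icc (0:ℝ) τ))) :
    ∃ R : ℝ → ℝ → Mtx d,
      StronglyMeasurable (Function.uncurry R) ∧
      (∀ t σ : ℝ, t < σ → R t σ = 0) ∧
      (∀ᵐ q ∂(volume.restrict (Set.Icc (0:ℝ) τ ×ˢ Set.Icc (0:ℝ) τ)),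
        K q.1 q.2 = R q.1 q.2 + ∫ ρ in Set.Icc (0:ℝ) τ, (K q.1 ρ).comp (R ρ q.2) ∧
        K q.1 q.2 = R q.1 q.2 + ∫ ρ in Set.Icc (0:ℝ) τ, (R q.1 ρ).comp (K ρ q.2)) ∧
      (∃ c : ℝ, ∀ᵐ σ ∂(volume.restrict (Set.Icc (0:ℝ) τ)),
        (∫ t in Set.Icc (0:ℝ) τ, ‖R t σ‖) ≤ c) ∧
      (∃ c : ℝ, ∀ᵐ t ∂(volume.restrict (Set.Icc (0:ℝ) τ)),
        (∫ σ in Set.Icc (0:ℝ) τ, ‖R t σ‖) ≤ c) :=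
  resolvent_exists_general d τ K hKmeas hKvolterra hKbdd
end
end

section
/- If C ∈ L^∞([s,s+τ]×[−τ,0], ℝ^{d×d}) and φ ∈ X = L²([−τ,0], ℝ^d), then the initial value problem given by the renewal equation x(t) = ∫_{−τ}^0 C(t,θ) x_t(θ) dθ for t ∈ (s, s+τ] together with x_s = φ has a unique solution x ∈ L²([s,s+τ], ℝ^d) on [s,s+τ]. -/
open MeasureTheory Set Filter

noncomputable section

/-!
On `[s, s + τ]` the history `x_t` only involves the datum `φ` and the values of `x` on `[s, t]`,
so the renewal equation is a fixed-point problem `z = T z` for an affine Volterra operator `T` on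
`L²([s, s + τ])`. The essential bound `M` of `C` and Cauchy–Schwarz give
`‖(T z - T w)(t)‖² ≤ M² τ ∫ₛᵗ ‖z - w‖²`, and iterating this,
`‖Tⁿ z - Tⁿ w‖² ≤ (M² τ²)ⁿ / n! · ‖z - w‖²`. Hence some iterate of `T` is a contraction and `T`
has a unique fixed point.
-/

theorem MeasureTheory.Lp.norm_sq_eq_integral_norm_sq {α E : Type*} [MeasurableSpace α]
    {μ : Measure α} [NormedAddCommGroup E] (f : Lp E 2 μ) :
    ‖f‖ ^ 2 = ∫ x, ‖f x‖ ^ 2 ∂μ := by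
  rw [Lp.norm_def, toReal_eLpNorm (Lp.aestronglyMeasurable f),
    lpNorm_eq_integral_norm_rpow_toReal two_ne_zero ENNReal.ofNat_ne_top
      (Lp.aestronglyMeasurable f)]
  simp only [ENNReal.toReal_ofNat, Real.rpow_two]
  rw [← Real.rpow_natCast, ← Real.rpow_mul (integral_nonneg fun x => by positivity)]
  norm_num

theorem MeasureTheory.Lp.integrable_norm_sub_sq {α E : Type*} [MeasurableSpace α]
    {μ : Measure α} [NormedAddCommGroup E] (f g : Lp E 2 μ) :
    Integrable (fun x => ‖f x - g x‖ ^ 2) μ :=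
  ((Lp.memLp f).sub (Lp.memLp g)).integrable_norm_pow two_ne_zero

theorem MeasureTheory.Lp.norm_sub_sq_eq_integral {α E : Type*} [MeasurableSpace α]
    {μ : Measure α} [NormedAddCommGroup E] (f g : Lp E 2 μ) :
    ‖f - g‖ ^ 2 = ∫ x, ‖f x - g x‖ ^ 2 ∂μ := by
  rw [Lp.norm_sq_eq_integral_norm_sq]
  exact integral_congr_ae ((Lp.coeFn_sub f g).mono fun x hx => by simp only [hx, Pi.sub_apply])

theorem sq_integral_norm_le_measureReal_mul {α E : Type*} [MeasurableSpace α] {μ : Measure α}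
    [IsFiniteMeasure μ] [NormedAddCommGroup E] {f : α → E} (hf : MemLp f 2 μ) :
    (∫ x, ‖f x‖ ∂μ) ^ 2 ≤ μ.real univ * ∫ x, ‖f x‖ ^ 2 ∂μ := by
  have h := integral_mul_norm_le_Lp_mul_Lq (μ := μ) Real.HolderConjugate.two_two
    (f := fun _ => (1 : ℝ)) (g := fun x => ‖f x‖) (by simpa using memLp_const 1)
    (by simpa using hf.norm)
  simp only [norm_one, norm_norm, one_mul, integral_const, smul_eq_mul, Real.rpow_two, one_pow,
    mul_one, ← Real.sqrt_eq_rpow] at h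
  calc (∫ x, ‖f x‖ ∂μ) ^ 2 ≤ (√(μ.real univ) * √(∫ x, ‖f x‖ ^ 2 ∂μ)) ^ 2 :=
        pow_le_pow_left₀ (integral_nonneg fun x => norm_nonneg _) h 2
    _ = μ.real univ * ∫ x, ‖f x‖ ^ 2 ∂μ := by
        rw [mul_pow, Real.sq_sqrt measureReal_nonneg,
          Real.sq_sqrt (integral_nonneg fun x => by positivity)]

theorem exists_ae_ae_norm_le_of_memLp_top {F : Type*} [NormedAddCommGroup F] {f : ℝ → ℝ → F}
    {A B : Set ℝ} (hf : MemLp (Function.uncurry f) ⊤ (volume.restrict (A ×ˢ B))) :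
    ∃ M, ∀ᵐ t ∂(volume.restrict A), ∀ᵐ θ ∂(volume.restrict B), ‖f t θ‖ ≤ M := by
  have h := ae_le_lpNorm_exponent_top hf
  rw [Measure.volume_eq_prod, ← Measure.prod_restrict] at h
  exact ⟨_, Measure.ae_ae_of_ae_prod h⟩

section Volterra

open scoped Nat

theorem exists_pow_div_factorial_lt_one (x : ℝ) : ∃ n : ℕ, x ^ n / n ! < 1 :=
  ((FloorSemiring.tendsto_pow_div_factorial_atTop x).eventually_lt_const one_pos).exists

theorem integral_Icc_pow_sub_div_factorial {a t : ℝ} (h : a ≤ t) (n : ℕ) :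
    ∫ u in Icc a t, (u - a) ^ n / n ! = (t - a) ^ (n + 1) / (n + 1)! := by
  rw [integral_Icc_eq_integral_Ioc, ← intervalIntegral.integral_of_le h,
    intervalIntegral.integral_div, intervalIntegral.integral_comp_sub_right (fun u => u ^ n),
    integral_pow, sub_self, zero_pow n.succ_ne_zero, sub_zero, Nat.factorial_succ]
  push_cast
  field_simp

variable {E : Type*} [NormedAddCommGroup E] {a b L : ℝ}
  {T : Lp E 2 (volume.restrict (Icc a b)) → Lp E 2 (volume.restrict (Icc a b))}

theorem setIntegral_Icc_norm_sub_iterate_sq_le (hL : 0 ≤ L)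
    (hT : ∀ z w, ∀ᵐ t ∂(volume.restrict (Icc a b)),
      ‖T z t - T w t‖ ^ 2 ≤ L * ∫ u in Icc a t, ‖z u - w u‖ ^ 2)
    (z w : Lp E 2 (volume.restrict (Icc a b))) (n : ℕ) {t : ℝ} (ht : t ∈ Icc a b) :
    ∫ u in Icc a t, ‖T^[n] z u - T^[n] w u‖ ^ 2 ≤ (L * (t - a)) ^ n / n ! * ‖z - w‖ ^ 2 := by
  induction n generalizing t with
  | zero =>
    rw [Lp.norm_sub_sq_eq_integral, pow_zero, Nat.factorial_zero, Nat.cast_one, div_one,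
      one_mul]
    exact setIntegral_mono_set (Lp.integrable_norm_sub_sq z w)
      (.of_forall fun u => by positivity) (Icc_subset_Icc_right ht.2).eventuallyLE
  | succ n ih =>
    have hsub : Icc a t ⊆ Icc a b := Icc_subset_Icc_right ht.2
    calc ∫ u in Icc a t, ‖T^[n + 1] z u - T^[n + 1] w u‖ ^ 2
        ≤ ∫ u in Icc a t, L * ((L * (u - a)) ^ n / n ! * ‖z - w‖ ^ 2) := by
          refine integral_mono_ae (IntegrableOn.mono_set (Lp.integrable_norm_sub_sq _ _) hsub)
            (by fun_prop : Continuous _).integrableOn_Icc ?_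
          filter_upwards [ae_restrict_of_ae_restrict_of_subset hsub (hT (T^[n] z) (T^[n] w)),
            ae_restrict_mem measurableSet_Icc] with u hu hu_mem
          rw [Function.iterate_succ_apply', Function.iterate_succ_apply']
          exact hu.trans (mul_le_mul_of_nonneg_left
            (ih ⟨hu_mem.1, hu_mem.2.trans ht.2⟩) hL)
      _ = L ^ (n + 1) * ‖z - w‖ ^ 2 * ∫ u in Icc a t, (u - a) ^ n / n ! := by
          rw [← integral_const_mul]
          congr 1 with u
          rw [mul_pow]
          ring
      _ = (L * (t - a)) ^ (n + 1) / (n + 1)! * ‖z - w‖ ^ 2 := by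
          rw [integral_Icc_pow_sub_div_factorial ht.1, mul_pow]
          ring

theorem existsUnique_isFixedPt_of_volterra [CompleteSpace E] (hab : a ≤ b) (hL : 0 ≤ L)
    (hT : ∀ z w, ∀ᵐ t ∂(volume.restrict (Icc a b)),
      ‖T z t - T w t‖ ^ 2 ≤ L * ∫ u in Icc a t, ‖z u - w u‖ ^ 2) :
    ∃! p, Function.IsFixedPt T p := by
  obtain ⟨n, hn⟩ := exists_pow_div_factorial_lt_one (L * (b - a))
  set c := (L * (b - a)) ^ n / (n ! : ℝ)
  have hc : 0 ≤ c := by have := sub_nonneg.2 hab; positivity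
  have hlip : LipschitzWith ((√c).toNNReal) T^[n] := by
    refine LipschitzWith.of_dist_le_mul fun z w => ?_
    rw [dist_eq_norm, dist_eq_norm, Real.coe_toNNReal _ (Real.sqrt_nonneg c),
      ← Real.sqrt_sq (norm_nonneg _), ← Real.sqrt_sq (norm_nonneg (z - w)), ← Real.sqrt_mul hc,
      Lp.norm_sub_sq_eq_integral]
    exact Real.sqrt_le_sqrt
      (setIntegral_Icc_norm_sub_iterate_sq_le hL hT z w n ⟨hab, le_rfl⟩)
  have hcon : ContractingWith ((√c).toNNReal) T^[n] :=
    ⟨by rwa [Real.toNNReal_lt_one, Real.sqrt_lt' one_pos, one_pow], hlip⟩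
  exact ⟨_, hcon.isFixedPt_fixedPoint_iterate, fun q hq => hcon.fixedPoint_unique (hq.iterate n)⟩

end Volterra

section RenewalEquation

variable {E : Type*} {τ s t M : ℝ}

/-- `z` on `[s, ∞)` preceded by the history `φ`, placed on `(-∞, s)` so that `x_s = φ`. -/
def glueHistory (s : ℝ) (φ z : ℝ → E) (u : ℝ) : E :=
  if u < s then φ (u - s) else z u

theorem glueHistory_of_lt {φ z : ℝ → E} {u : ℝ} (hu : u < s) :
    glueHistory s φ z u = φ (u - s) :=
  if_pos hu

theorem glueHistory_of_le {φ z : ℝ → E} {u : ℝ} (hu : s ≤ u) : glueHistory s φ z u = z u :=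
  if_neg hu.not_gt

theorem measurePreserving_const_add_restrict_Icc (τ t : ℝ) :
    MeasurePreserving (t + ·) (volume.restrict (Icc (-τ) 0)) (volume.restrict (Icc (t - τ) t)) := by
  have h := (measurePreserving_add_left volume t).restrict_preimage
    (measurableSet_Icc (a := t - τ) (b := t))
  rwa [preimage_const_add_Icc, sub_sub_cancel_left, sub_self] at h

theorem measurePreserving_sub_const_restrict_Ico (τ s : ℝ) :
    MeasurePreserving (· - s) (volume.restrict (Ico (s - τ) s)) (volume.restrict (Ico (-τ) 0)) := by
  have h := (measurePreserving_sub_right volume s).restrict_preimage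
    (measurableSet_Ico (a := -τ) (b := 0))
  rwa [preimage_sub_const_Ico, neg_add_eq_sub, zero_add] at h

theorem glueHistory_ae_eq {φ z y : ℝ → E} (hz : z =ᵐ[volume.restrict (Icc s (s + τ))] y)
    (hy : ∀ᵐ θ ∂(volume.restrict (Icc (-τ) 0)), y (s + θ) = φ θ) :
    glueHistory s φ z =ᵐ[volume.restrict (Icc (s - τ) (s + τ))] y := by
  have hsplit : Icc (s - τ) (s + τ) ⊆ Ico (s - τ) s ∪ Icc s (s + τ) := fun u hu =>
    (lt_or_ge u s).imp (fun h => ⟨hu.1, h⟩) fun h => ⟨h, hu.2⟩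
  refine ae_restrict_of_ae_restrict_of_subset hsplit ((ae_restrict_union_iff _ _ _).2 ⟨?_, ?_⟩)
  · have hy' := (measurePreserving_sub_const_restrict_Ico τ s).quasiMeasurePreserving.ae
      (ae_restrict_of_ae_restrict_of_subset Ico_subset_Icc_self hy)
    filter_upwards [hy', ae_restrict_mem measurableSet_Ico] with u hyu hu
    rw [glueHistory_of_lt hu.2, ← hyu, add_sub_cancel]
  · filter_upwards [hz, ae_restrict_mem measurableSet_Icc] with u hzu hu
    rw [glueHistory_of_le hu.1, hzu]

theorem glueHistory_initial (φ z : ℝ → E) :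
    ∀ᵐ θ ∂(volume.restrict (Icc (-τ) 0)), glueHistory s φ z (s + θ) = φ θ := by
  rw [Measure.restrict_congr_set Ico_ae_eq_Icc.symm]
  exact ae_restrict_of_forall_mem measurableSet_Ico fun θ hθ => by
    rw [glueHistory_of_lt (by linarith [hθ.2]), add_sub_cancel_left]

variable [NormedAddCommGroup E]

theorem glueHistory_sub_glueHistory (φ f g : ℝ → E) :
    glueHistory s φ f - glueHistory s φ g = (Ici s).indicator (f - g) := by
  ext u
  rcases lt_or_ge u s with hu | hu
  · simp [glueHistory_of_lt hu, hu]
  · simp [glueHistory_of_le hu, hu]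

theorem memLp_glueHistory {φ z : ℝ → E} (hφ : MemLp φ 2 (volume.restrict (Icc (-τ) 0)))
    (hz : MemLp z 2 (volume.restrict (Icc s (s + τ)))) :
    MemLp (glueHistory s φ z) 2 (volume.restrict (Icc (s - τ) (s + τ))) := by
  have hsplit :
      glueHistory s φ z = (Iio s).indicator (fun u => φ (u - s)) + (Ici s).indicator z := by
    ext u
    rcases lt_or_ge u s with hu | hu
    · simp [glueHistory_of_lt hu, hu]
    · simp [glueHistory_of_le hu, hu, hu.not_gt]
  rw [hsplit]
  refine MemLp.add ?_ ?_
  · rw [memLp_indicator_iff_restrict measurableSet_Iio, Measure.restrict_restrict measurableSet_Iio]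
    have hφ' := hφ.mono_measure (Measure.restrict_mono Ico_subset_Icc_self le_rfl)
    exact (hφ'.comp_measurePreserving (measurePreserving_sub_const_restrict_Ico τ s)).mono_measure
      (Measure.restrict_mono (fun u hu => ⟨hu.2.1, hu.1⟩ :
        Iio s ∩ Icc (s - τ) (s + τ) ⊆ Ico (s - τ) s) le_rfl)
  · rw [memLp_indicator_iff_restrict measurableSet_Ici, Measure.restrict_restrict measurableSet_Ici]
    exact hz.mono_measure (Measure.restrict_mono (fun u hu => ⟨hu.1, hu.2.2⟩ :
      Ici s ∩ Icc (s - τ) (s + τ) ⊆ Icc s (s + τ)) le_rfl)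

theorem MeasureTheory.StronglyMeasurable.glueHistory {φ z : ℝ → E} (hφ : StronglyMeasurable φ)
    (hz : StronglyMeasurable z) : StronglyMeasurable (glueHistory s φ z) :=
  StronglyMeasurable.ite measurableSet_Iio (hφ.comp_measurable (measurable_id.sub measurable_const))
    hz

variable [NormedSpace ℝ E] {C : ℝ → ℝ → E →L[ℝ] E}

def renewalRHS (τ : ℝ) (C : ℝ → ℝ → E →L[ℝ] E) (x : ℝ → E) (t : ℝ) : E :=
  ∫ θ in Icc (-τ) 0, C t θ (x (t + θ))

theorem renewalRHS_congr_ae {x y : ℝ → E} (h : x =ᵐ[volume.restrict (Icc (t - τ) t)] y) :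
    renewalRHS τ C x t = renewalRHS τ C y t :=
  integral_congr_ae <| ((measurePreserving_const_add_restrict_Icc τ t).quasiMeasurePreserving.ae
    h).mono fun θ hθ => by simp only [hθ]

theorem integrable_renewal_integrand
    (hCm : AEStronglyMeasurable (C t) (volume.restrict (Icc (-τ) 0)))
    (hC : ∀ᵐ θ ∂(volume.restrict (Icc (-τ) 0)), ‖C t θ‖ ≤ M) {x : ℝ → E}
    (hx : MemLp x 2 (volume.restrict (Icc (t - τ) t))) :
    Integrable (fun θ => C t θ (x (t + θ))) (volume.restrict (Icc (-τ) 0)) := by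
  have hx' := hx.comp_measurePreserving (measurePreserving_const_add_restrict_Icc τ t)
  refine ((hx'.integrable one_le_two).norm.const_mul M).mono'
    (isBoundedBilinearMap_apply.continuous.comp_aestronglyMeasurable₂ hCm
      hx'.aestronglyMeasurable) ?_
  exact hC.mono fun θ hθ => (C t θ).le_of_opNorm_le hθ _

theorem sq_norm_renewalRHS_le (hτ : 0 ≤ τ)
    (hC : ∀ᵐ θ ∂(volume.restrict (Icc (-τ) 0)), ‖C t θ‖ ≤ M) {x : ℝ → E}
    (hx : MemLp x 2 (volume.restrict (Icc (t - τ) t))) :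
    ‖renewalRHS τ C x t‖ ^ 2 ≤ M ^ 2 * τ * ∫ u in Icc (t - τ) t, ‖x u‖ ^ 2 := by
  have hmp := measurePreserving_const_add_restrict_Icc τ t
  have hx' : MemLp (fun θ => x (t + θ)) 2 _ := hx.comp_measurePreserving hmp
  have hnorm : ‖renewalRHS τ C x t‖ ≤ M * ∫ θ in Icc (-τ) 0, ‖x (t + θ)‖ := by
    rw [← integral_const_mul]
    exact norm_integral_le_of_norm_le ((hx'.integrable one_le_two).norm.const_mul M)
      (hC.mono fun θ hθ => (C t θ).le_of_opNorm_le hθ _)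
  have hcs := sq_integral_norm_le_measureReal_mul hx'
  rw [measureReal_restrict_apply_univ, Real.volume_real_Icc_of_le (by linarith), sub_neg_eq_add,
    zero_add, hmp.integral_comp (MeasurableEquiv.addLeft t).measurableEmbedding
      (fun u => ‖x u‖ ^ 2)] at hcs
  calc ‖renewalRHS τ C x t‖ ^ 2 ≤ (M * ∫ θ in Icc (-τ) 0, ‖x (t + θ)‖) ^ 2 :=
        pow_le_pow_left₀ (norm_nonneg _) hnorm 2
    _ ≤ M ^ 2 * (τ * ∫ u in Icc (t - τ) t, ‖x u‖ ^ 2) := by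
        rw [mul_pow]
        gcongr
    _ = M ^ 2 * τ * ∫ u in Icc (t - τ) t, ‖x u‖ ^ 2 := by ring

theorem renewalRHS_sub {x y : ℝ → E}
    (hx : Integrable (fun θ => C t θ (x (t + θ))) (volume.restrict (Icc (-τ) 0)))
    (hy : Integrable (fun θ => C t θ (y (t + θ))) (volume.restrict (Icc (-τ) 0))) :
    renewalRHS τ C x t - renewalRHS τ C y t = renewalRHS τ C (x - y) t := by
  simp only [renewalRHS, Pi.sub_apply, map_sub]
  exact (integral_sub hx hy).symm

theorem sq_norm_renewalRHS_glueHistory_sub_le (hτ : 0 ≤ τ) (ht : t ∈ Icc s (s + τ))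
    (hCm : AEStronglyMeasurable (C t) (volume.restrict (Icc (-τ) 0)))
    (hC : ∀ᵐ θ ∂(volume.restrict (Icc (-τ) 0)), ‖C t θ‖ ≤ M) {φ f g : ℝ → E}
    (hφ : MemLp φ 2 (volume.restrict (Icc (-τ) 0)))
    (hf : MemLp f 2 (volume.restrict (Icc s (s + τ))))
    (hg : MemLp g 2 (volume.restrict (Icc s (s + τ)))) :
    ‖renewalRHS τ C (glueHistory s φ f) t - renewalRHS τ C (glueHistory s φ g) t‖ ^ 2
      ≤ M ^ 2 * τ * ∫ u in Icc s t, ‖f u - g u‖ ^ 2 := by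
  have hts : t - τ ≤ s := by linarith [ht.2]
  have hglue : ∀ z, MemLp z 2 (volume.restrict (Icc s (s + τ))) →
      MemLp (glueHistory s φ z) 2 (volume.restrict (Icc (t - τ) t)) := fun z hz =>
    (memLp_glueHistory hφ hz).mono_measure
      (Measure.restrict_mono (Icc_subset_Icc (by linarith [ht.1]) ht.2) le_rfl)
  have hnorm : ∀ u, ‖(glueHistory s φ f - glueHistory s φ g) u‖ ^ 2
      = (Ici s).indicator (fun u => ‖f u - g u‖ ^ 2) u := by
    intro u
    rw [glueHistory_sub_glueHistory]
    by_cases hu : u ∈ Ici s <;> simp [hu]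
  rw [renewalRHS_sub (integrable_renewal_integrand hCm hC (hglue f hf))
    (integrable_renewal_integrand hCm hC (hglue g hg))]
  refine (sq_norm_renewalRHS_le hτ hC ((hglue f hf).sub (hglue g hg))).trans_eq ?_
  simp_rw [hnorm]
  have hset : Icc (t - τ) t ∩ Ici s = Icc s t :=
    Set.ext fun u => ⟨fun h => ⟨h.2, h.1.2⟩, fun h => ⟨⟨hts.trans h.1, h.2⟩, h.1⟩⟩
  rw [setIntegral_indicator measurableSet_Ici, hset]

theorem aestronglyMeasurable_renewalRHS (hC : StronglyMeasurable (Function.uncurry C))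
    {x : ℝ → E} (hx : StronglyMeasurable x) (μ : Measure ℝ) [SFinite μ] :
    AEStronglyMeasurable (renewalRHS τ C x) μ :=
  AEStronglyMeasurable.integral_prod_right' <|
    isBoundedBilinearMap_apply.continuous.comp_aestronglyMeasurable₂ hC.aestronglyMeasurable
      (hx.comp_measurable (measurable_fst.add measurable_snd)).aestronglyMeasurable

theorem memLp_renewalRHS_glueHistory (hτ : 0 ≤ τ) (hCm : StronglyMeasurable (Function.uncurry C))
    (hC : ∀ᵐ t ∂(volume.restrict (Icc s (s + τ))),
      ∀ᵐ θ ∂(volume.restrict (Icc (-τ) 0)), ‖C t θ‖ ≤ M)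
    {φ z : ℝ → E} (hφm : StronglyMeasurable φ) (hφ : MemLp φ 2 (volume.restrict (Icc (-τ) 0)))
    (hzm : StronglyMeasurable z) (hz : MemLp z 2 (volume.restrict (Icc s (s + τ)))) :
    MemLp (renewalRHS τ C (glueHistory s φ z)) 2 (volume.restrict (Icc s (s + τ))) := by
  have hglue := memLp_glueHistory hφ hz
  refine MemLp.of_bound (aestronglyMeasurable_renewalRHS hCm (hφm.glueHistory hzm) _)
    √(M ^ 2 * τ * ∫ u in Icc (s - τ) (s + τ), ‖glueHistory s φ z u‖ ^ 2) ?_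
  filter_upwards [hC, ae_restrict_mem measurableSet_Icc] with t hCt ht
  have hsub : Icc (t - τ) t ⊆ Icc (s - τ) (s + τ) := Icc_subset_Icc (by linarith [ht.1]) ht.2
  refine Real.le_sqrt_of_sq_le ((sq_norm_renewalRHS_le hτ hCt
    (hglue.mono_measure (Measure.restrict_mono hsub le_rfl))).trans ?_)
  exact mul_le_mul_of_nonneg_left (setIntegral_mono_set (hglue.integrable_norm_pow two_ne_zero)
    (.of_forall fun u => by positivity) hsub.eventuallyLE) (by positivity)

theorem ae_eq_renewalRHS_glueHistory_of_solution {φ y z : ℝ → E}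
    (hz : z =ᵐ[volume.restrict (Icc s (s + τ))] y)
    (hy₀ : ∀ᵐ θ ∂(volume.restrict (Icc (-τ) 0)), y (s + θ) = φ θ)
    (hy : ∀ᵐ t ∂(volume.restrict (Icc s (s + τ))), y t = renewalRHS τ C y t) :
    z =ᵐ[volume.restrict (Icc s (s + τ))] renewalRHS τ C (glueHistory s φ z) := by
  filter_upwards [hz, hy, ae_restrict_mem measurableSet_Icc] with t hzt hyt ht
  rw [hzt, hyt]
  exact renewalRHS_congr_ae (ae_restrict_of_ae_restrict_of_subset
    (Icc_subset_Icc (by linarith [ht.1]) ht.2) (glueHistory_ae_eq hz hy₀).symm)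

theorem existsUnique_renewalRHS_glueHistory_fixedPoint [CompleteSpace E] (hτ : 0 ≤ τ)
    (hCm : StronglyMeasurable (Function.uncurry C))
    (hC : ∀ᵐ t ∂(volume.restrict (Icc s (s + τ))),
      ∀ᵐ θ ∂(volume.restrict (Icc (-τ) 0)), ‖C t θ‖ ≤ M)
    {φ : ℝ → E} (hφm : StronglyMeasurable φ) (hφ : MemLp φ 2 (volume.restrict (Icc (-τ) 0))) :
    ∃! p : Lp E 2 (volume.restrict (Icc s (s + τ))),
      ⇑p =ᵐ[volume.restrict (Icc s (s + τ))] renewalRHS τ C (glueHistory s φ p) := by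
  let T (z : Lp E 2 (volume.restrict (Icc s (s + τ)))) : Lp E 2 (volume.restrict (Icc s (s + τ))) :=
    (memLp_renewalRHS_glueHistory hτ hCm hC hφm hφ (Lp.stronglyMeasurable z) (Lp.memLp z)).toLp
  have hT (z) : ⇑(T z) =ᵐ[volume.restrict (Icc s (s + τ))] renewalRHS τ C (glueHistory s φ z) :=
    MemLp.coeFn_toLp _
  have hfix (p) : Function.IsFixedPt T p ↔
      ⇑p =ᵐ[volume.restrict (Icc s (s + τ))] renewalRHS τ C (glueHistory s φ p) :=
    ⟨fun h => (Lp.ext_iff.1 h).symm.trans (hT p), fun h => Lp.ext ((hT p).trans h.symm)⟩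
  refine (existsUnique_congr hfix).1 (existsUnique_isFixedPt_of_volterra (L := M ^ 2 * τ)
    (by linarith) (by positivity) fun z w => ?_)
  filter_upwards [hT z, hT w, hC, ae_restrict_mem measurableSet_Icc] with t hzt hwt hCt ht
  rw [hzt, hwt]
  exact sq_norm_renewalRHS_glueHistory_sub_le hτ ht
    (hCm.comp_measurable measurable_prodMk_left).aestronglyMeasurable hCt hφ (Lp.memLp z)
    (Lp.memLp w)

end RenewalEquation

theorem existence_uniqueness_RE_general
    (d : ℕ) (τ s : ℝ) (hτ : 0 < τ)
    (C : ℝ → ℝ → Mtx d)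
    (hCmeas : StronglyMeasurable (Function.uncurry C))
    (hCbdd : MemLp (Function.uncurry C) ⊤
      (volume.restrict (Set.Icc s (s+τ) ×ˢ Set.Icc (-τ) (0:ℝ))))
    (φ : ℝ → Evec d)
    (hφ : MemLp φ 2 (volume.restrict (Set.Icc (-τ) (0:ℝ)))) :
    ∃ x : ℝ → Evec d,
      (∀ᵐ θ ∂(volume.restrict (Set.Icc (-τ) (0:ℝ))), x (s + θ) = φ θ) ∧
      MemLp x 2 (volume.restrict (Set.Icc s (s+τ))) ∧
      (∀ᵐ t ∂(volume.restrict (Set.Ioc s (s+τ))),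
        x t = ∫ θ in Set.Icc (-τ) (0:ℝ), (C t θ) (x (t+θ))) ∧
      ∀ y : ℝ → Evec d,
        (∀ᵐ θ ∂(volume.restrict (Set.Icc (-τ) (0:ℝ))), y (s + θ) = φ θ) →
        MemLp y 2 (volume.restrict (Set.Icc s (s+τ))) →
        (∀ᵐ t ∂(volume.restrict (Set.Ioc s (s+τ))),
          y t = ∫ θ in Set.Icc (-τ) (0:ℝ), (C t θ) (y (t+θ))) →
        y =ᵐ[volume.restrict (Set.Icc s (s+τ))] x := by
  obtain ⟨M, hCM⟩ := exists_ae_ae_norm_le_of_memLp_top hCbdd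
  -- `renewalRHS` is measurable in `t` only for strongly measurable data, hence the representative
  -- `hφm.mk φ` of `φ`.
  have hφm := hφ.aestronglyMeasurable
  obtain ⟨p, hp, hp_unique⟩ := existsUnique_renewalRHS_glueHistory_fixedPoint hτ.le hCmeas hCM
    hφm.stronglyMeasurable_mk (hφ.ae_eq hφm.ae_eq_mk)
  have hIoc : volume.restrict (Ioc s (s + τ)) = volume.restrict (Icc s (s + τ)) :=
    Measure.restrict_congr_set Ioc_ae_eq_Icc
  have hpx : ⇑p =ᵐ[volume.restrict (Icc s (s + τ))] glueHistory s (hφm.mk φ) p :=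
    ae_restrict_of_forall_mem measurableSet_Icc fun u hu => (glueHistory_of_le hu.1).symm
  refine ⟨glueHistory s (hφm.mk φ) p, ?_, (Lp.memLp p).ae_eq hpx, ?_, fun y hy₀ hy hy_eq => ?_⟩
  · filter_upwards [glueHistory_initial (hφm.mk φ) p, hφm.ae_eq_mk] with θ h1 h2
    rw [h1, h2]
  · rw [hIoc]
    filter_upwards [hp, hpx] with t h1 h2
    rw [← h2, h1]
    rfl
  · rw [hIoc] at hy_eq
    obtain rfl := hp_unique _ (ae_eq_renewalRHS_glueHistory_of_solution hy.coeFn_toLp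
      (hy₀.mp (hφm.ae_eq_mk.mono fun θ h1 h2 => h2.trans h1)) hy_eq)
    exact hy.coeFn_toLp.symm.trans hpx

/-- If `C ∈ L^∞([s,s+τ]×[−τ,0], ℝ^{d×d})` and `φ ∈ X = L²([−τ,0], ℝ^d)`,
then the initial value problem given by the renewal equation
`x(t) = ∫_{−τ}^0 C(t,θ) x_t(θ) dθ` for `t ∈ (s, s+τ]` together with `x_s = φ` has a unique
solution `x ∈ L²([s,s+τ], ℝ^d)` on `[s,s+τ]`. -/
theorem existence_uniqueness_RE
    (d : ℕ) (hd : 0 < d) (τ s : ℝ) (hτ : 0 < τ)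
    (C : ℝ → ℝ → Mtx d)
    (hCmeas : StronglyMeasurable (Function.uncurry C))
    (hCbdd : MemLp (Function.uncurry C) ⊤
      (volume.restrict (Set.Icc s (s+τ) ×ˢ Set.Icc (-τ) (0:ℝ))))
    (φ : ℝ → Evec d)
    (hφ : MemLp φ 2 (volume.restrict (Set.Icc (-τ) (0:ℝ)))) :
    ∃ x : ℝ → Evec d,
      (∀ᵐ θ ∂(volume.restrict (Set.Icc (-τ) (0:ℝ))), x (s + θ) = φ θ) ∧
      MemLp x 2 (volume.restrict (Set.Icc s (s+τ))) ∧
      (∀ᵐ t ∂(volume.restrict (Set.Ioc s (s+τ))),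
        x t = ∫ θ in Set.Icc (-τ) (0:ℝ), (C t θ) (x (t+θ))) ∧
      ∀ y : ℝ → Evec d,
        (∀ᵐ θ ∂(volume.restrict (Set.Icc (-τ) (0:ℝ))), y (s + θ) = φ θ) →
        MemLp y 2 (volume.restrict (Set.Icc s (s+τ))) →
        (∀ᵐ t ∂(volume.restrict (Set.Ioc s (s+τ))),
          y t = ∫ θ in Set.Icc (-τ) (0:ℝ), (C t θ) (y (t+θ))) →
        y =ᵐ[volume.restrict (Set.Icc s (s+τ))] x :=
  existence_uniqueness_RE_general d τ s hτ C hCmeas hCbdd φ hφ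
end
end

section
/- Assume hypotheses H1 and H2. If the operator I_{X⁺} − L_N⁺ F V⁺: X⁺ → X⁺ is invertible, then the finite-dimensional operator I_{X_N⁺} − R_N⁺ F V⁺ P_N⁺: X_N⁺ → X_N⁺ is invertible. Moreover, given W̄ ∈ X_N⁺, the unique solution ŵ ∈ X⁺ of (I_{X⁺} − L_N⁺ F V⁺) w = P_N⁺ W̄ and the unique solution Ŵ ∈ X_N⁺ of (I_{X_N⁺} − R_N⁺ F V⁺ P_N⁺) W = W̄ are related by Ŵ = R_N⁺ ŵ and ŵ = P_N⁺ Ŵ. -/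
open MeasureTheory Set Filter

noncomputable section

/-- The Legendre polynomial of degree `N` (Rodrigues' formula, up to a nonzero
normalization constant, which does not affect its zeros). -/
def leg (N : ℕ) : Polynomial ℝ :=
  Polynomial.derivative^[N] ((Polynomial.X ^ 2 - 1) ^ N)

/-- The `i`-th Lagrange basis polynomial `ℓ_i⁺` at the given nodes, evaluated at `t`. -/
def lagBasis {N : ℕ} (nodes : Fin N → ℝ) (i : Fin N) (t : ℝ) : ℝ :=
  (Lagrange.basis Finset.univ nodes i).eval t

/-- The prolongation operator `P_N⁺` (polynomial interpolation of discrete data). -/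
def PN {d N : ℕ} (nodes : Fin N → ℝ) (W : Fin N → Evec d) (t : ℝ) : Evec d :=
  ∑ i, lagBasis nodes i t • W i

/-- The Lagrange interpolation operator `L_N⁺ = P_N⁺ R_N⁺` at the given nodes. -/
def LN {d N : ℕ} (nodes : Fin N → ℝ) (w : ℝ → Evec d) (t : ℝ) : Evec d :=
  ∑ i, lagBasis nodes i t • w (nodes i)

/-- The operator `F V⁺ : X⁺ → X⁺`: extension of `w` by `0` on `[−τ,0]` followed by `F`. -/
def FVp (d : ℕ) (τ s : ℝ) (C : ℝ → ℝ → Mtx d) (w : ℝ → Evec d) (t : ℝ) : Evec d :=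
  ∫ θ in Set.Icc (-τ) (0:ℝ), (C (s+t) θ) (if 0 < t+θ then w (t+θ) else 0)

/-- `f` belongs to the Sobolev space `H¹([0,h], ℝ^d)` with `H¹` norm at most `m`:
`f` a.e. equals an absolutely continuous function with `L²` derivative `g`, and
`‖f‖²_{L²} + ‖g‖²_{L²} ≤ m²`. -/
def H1BddBy (d : ℕ) (h : ℝ) (f : ℝ → Evec d) (m : ℝ) : Prop :=
  ∃ (a : Evec d) (g : ℝ → Evec d),
    MemLp g 2 (volume.restrict (Set.Icc (0:ℝ) h)) ∧
    (∀ᵐ t ∂(volume.restrict (Set.Icc (0:ℝ) h)), f t = a + ∫ u in (0:ℝ)..t, g u) ∧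
    (eLpNorm f 2 (volume.restrict (Set.Icc (0:ℝ) h))).toReal ^ 2 +
      (eLpNorm g 2 (volume.restrict (Set.Icc (0:ℝ) h))).toReal ^ 2 ≤ m ^ 2

/-!
Since `L_N⁺ = P_N⁺ R_N⁺`, the continuous collocation operator intertwines the discrete one:
`(I − L_N⁺ F V⁺) P_N⁺ = P_N⁺ (I − R_N⁺ F V⁺ P_N⁺)`, and `R_N⁺ P_N⁺ = I` because the nodes are
distinct. Conversely, a solution of `(I − L_N⁺ F V⁺) w = P_N⁺ W̄` satisfies
`w = P_N⁺ W̄ + L_N⁺ F V⁺ w = P_N⁺ W` with `W = W̄ + R_N⁺ F V⁺ w`, and `F V⁺` only sees `w` up to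
null sets, so `W` solves the discrete equation. Existence for the continuous problem thus gives
surjectivity of the discrete operator, and uniqueness gives injectivity, once the a.e. equality
of two polynomials on `[0,h]` (with `h > 0`) is upgraded to equality at the nodes.
-/

theorem ContinuousOn.memLp_restrict_of_isCompact {X E : Type*} [TopologicalSpace X]
    [MeasurableSpace X] [OpensMeasurableSpace X] {μ : Measure X} [IsFiniteMeasureOnCompacts μ]
    [NormedAddCommGroup E] {s : Set X} {f : X → E} (hs : IsCompact s) (hsm : MeasurableSet s)
    (hf : ContinuousOn f s) (p : ENNReal) : MemLp f p (μ.restrict s) := by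
  have : IsFiniteMeasure (μ.restrict s) := isFiniteMeasure_restrict.2 hs.measure_lt_top.ne
  obtain ⟨M, hM⟩ := hs.exists_bound_of_continuousOn hf
  exact MemLp.of_bound (hf.aestronglyMeasurable_of_isCompact hs hsm) M
    ((ae_restrict_iff' hsm).2 (ae_of_all _ hM))

section Collocation

variable {d N : ℕ} {τ s h : ℝ} {C : ℝ → ℝ → Mtx d} {nodes : Fin N → ℝ}

/-- The continuous collocation operator `I_{X⁺} − L_N⁺ F V⁺`. -/
def collocationOp (d : ℕ) (τ s : ℝ) (C : ℝ → ℝ → Mtx d) (nodes : Fin N → ℝ)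
    (w : ℝ → Evec d) (t : ℝ) : Evec d :=
  w t - LN nodes (FVp d τ s C w) t

/-- The discrete collocation operator `I_{X_N⁺} − R_N⁺ F V⁺ P_N⁺`. -/
def discreteCollocationOp (d : ℕ) (τ s : ℝ) (C : ℝ → ℝ → Mtx d) (nodes : Fin N → ℝ)
    (W : Fin N → Evec d) (i : Fin N) : Evec d :=
  W i - FVp d τ s C (PN nodes W) (nodes i)

lemma PN_apply_node (hinj : Function.Injective nodes) (W : Fin N → Evec d) (j : Fin N) :
    PN nodes W (nodes j) = W j := by
  rw [PN, Finset.sum_eq_single j]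
  · rw [lagBasis, Lagrange.eval_basis_self hinj.injOn (Finset.mem_univ j), one_smul]
  · intro i _ hij
    rw [lagBasis, Lagrange.eval_basis_of_ne hij (Finset.mem_univ j), zero_smul]
  · exact fun hj => absurd (Finset.mem_univ j) hj

lemma continuous_PN (nodes : Fin N → ℝ) (W : Fin N → Evec d) : Continuous (PN nodes W) :=
  continuous_finsetSum _ fun _ _ => (Polynomial.continuous _).smul continuous_const

lemma PN_add_LN (W : Fin N → Evec d) (v : ℝ → Evec d) (t : ℝ) :
    PN nodes W t + LN nodes v t = PN nodes (fun i => W i + v (nodes i)) t := by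
  simp only [PN, LN, smul_add, Finset.sum_add_distrib]

lemma PN_sub_LN (W : Fin N → Evec d) (v : ℝ → Evec d) (t : ℝ) :
    PN nodes W t - LN nodes v t = PN nodes (fun i => W i - v (nodes i)) t := by
  simp only [PN, LN, smul_sub, Finset.sum_sub_distrib]

lemma eq_of_PN_ae_eq (hh : 0 < h) (hmem : ∀ i, nodes i ∈ Icc 0 h)
    (hinj : Function.Injective nodes) {W W' : Fin N → Evec d}
    (hWW' : PN nodes W =ᵐ[volume.restrict (Icc 0 h)] PN nodes W') : W = W' := by
  have hEq := Measure.eqOn_Icc_of_ae_eq volume hh.ne hWW'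
    (continuous_PN nodes W).continuousOn (continuous_PN nodes W').continuousOn
  funext j
  rw [← PN_apply_node hinj W j, ← PN_apply_node hinj W' j, hEq (hmem j)]

lemma collocationOp_PN (W : Fin N → Evec d) :
    collocationOp d τ s C nodes (PN nodes W) =
      PN nodes (discreteCollocationOp d τ s C nodes W) :=
  funext fun t => PN_sub_LN W _ t

lemma FVp_congr_ae {w w' : ℝ → Evec d} (hww' : w =ᵐ[volume.restrict (Icc 0 h)] w')
    {t : ℝ} (ht : t ≤ h) : FVp d τ s C w t = FVp d τ s C w' t := by
  have hshift : ∀ᵐ θ ∂(volume : Measure ℝ), t + θ ∈ Icc 0 h → w (t + θ) = w' (t + θ) :=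
    (measurePreserving_add_left volume t).quasiMeasurePreserving.ae
      ((ae_restrict_iff' measurableSet_Icc).1 hww')
  refine setIntegral_congr_ae measurableSet_Icc (hshift.mono fun θ hθ hθmem => ?_)
  split_ifs with hpos
  · rw [hθ ⟨hpos.le, by linarith [hθmem.2]⟩]
  · rfl

lemma eq_PN_of_collocationOp_eq {w : ℝ → Evec d} {Wbar : Fin N → Evec d} {t : ℝ}
    (hw : collocationOp d τ s C nodes w t = PN nodes Wbar t) :
    w t = PN nodes (fun i => Wbar i + FVp d τ s C w (nodes i)) t := by
  rw [← PN_add_LN, ← hw, collocationOp, sub_add_cancel]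

lemma discreteCollocationOp_of_collocationOp_ae_eq (hnodes : ∀ i, nodes i ≤ h)
    {w : ℝ → Evec d} {Wbar : Fin N → Evec d}
    (hw : collocationOp d τ s C nodes w =ᵐ[volume.restrict (Icc 0 h)] PN nodes Wbar) :
    discreteCollocationOp d τ s C nodes (fun i => Wbar i + FVp d τ s C w (nodes i)) = Wbar := by
  have hwPN : w =ᵐ[volume.restrict (Icc 0 h)]
      PN nodes (fun i => Wbar i + FVp d τ s C w (nodes i)) :=
    hw.mono fun t ht => eq_PN_of_collocationOp_eq ht
  funext i
  rw [discreteCollocationOp, ← FVp_congr_ae hwPN (hnodes i), add_sub_cancel_right]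

end Collocation

theorem discrete_vs_continuous_collocation_general
    (d : ℕ) (τ h s : ℝ) (hh : 0 < h)
    (N : ℕ)
    (C : ℝ → ℝ → Mtx d)
    (nodes : Fin N → ℝ) (hmono : StrictMono nodes)
    (hmem : ∀ i, nodes i ∈ Set.Icc (0:ℝ) h)
    -- the operator I_{X⁺} − L_N⁺ F V⁺ : X⁺ → X⁺ is invertible
    (hinv : ∀ f : ℝ → Evec d, MemLp f 2 (volume.restrict (Set.Icc (0:ℝ) h)) →
      ∃ w : ℝ → Evec d, MemLp w 2 (volume.restrict (Set.Icc (0:ℝ) h)) ∧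
        ((fun t => w t - LN nodes (FVp d τ s C w) t)
          =ᵐ[volume.restrict (Set.Icc (0:ℝ) h)] f) ∧
        ∀ w' : ℝ → Evec d, MemLp w' 2 (volume.restrict (Set.Icc (0:ℝ) h)) →
          ((fun t => w' t - LN nodes (FVp d τ s C w') t)
            =ᵐ[volume.restrict (Set.Icc (0:ℝ) h)] f) →
          w' =ᵐ[volume.restrict (Set.Icc (0:ℝ) h)] w) :
    -- the operator I_{X_N⁺} − R_N⁺ F V⁺ P_N⁺ : X_N⁺ → X_N⁺ is invertible
    Function.Bijective
      (fun W : Fin N → Evec d =>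
        (fun i => W i - FVp d τ s C (PN nodes W) (nodes i))) ∧
    -- relation between the continuous and discrete solutions
    ∀ Wbar : Fin N → Evec d,
      (∃ what : ℝ → Evec d, ∀ t ∈ Set.Icc (0:ℝ) h,
        what t - LN nodes (FVp d τ s C what) t = PN nodes Wbar t) ∧
      (∀ what : ℝ → Evec d,
        (∀ t ∈ Set.Icc (0:ℝ) h,
          what t - LN nodes (FVp d τ s C what) t = PN nodes Wbar t) →
        ∀ What : Fin N → Evec d,
          (∀ i, What i - FVp d τ s C (PN nodes What) (nodes i) = Wbar i) →
          (∀ i, What i = what (nodes i)) ∧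
          (∀ t ∈ Set.Icc (0:ℝ) h, what t = PN nodes What t)) := by
  have hinj : Function.Injective nodes := hmono.injective
  have hnodes : ∀ i, nodes i ≤ h := fun i => (hmem i).2
  have hPN_memLp : ∀ W : Fin N → Evec d, MemLp (PN nodes W) 2 (volume.restrict (Icc 0 h)) :=
    fun W => (continuous_PN nodes W).continuousOn.memLp_restrict_of_isCompact isCompact_Icc
      measurableSet_Icc 2
  have hinjS : Function.Injective (discreteCollocationOp d τ s C nodes) := by
    intro W W' hWW'
    obtain ⟨w, -, -, hw⟩ := hinv _ (hPN_memLp (discreteCollocationOp d τ s C nodes W))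
    refine eq_of_PN_ae_eq hh hmem hinj
      ((hw _ (hPN_memLp W) ?_).trans (hw _ (hPN_memLp W') ?_).symm)
    · exact EventuallyEq.of_eq (collocationOp_PN W)
    · exact EventuallyEq.of_eq (hWW' ▸ collocationOp_PN W')
  have hsurjS : Function.Surjective (discreteCollocationOp d τ s C nodes) := fun Wbar => by
    obtain ⟨w, -, hw, -⟩ := hinv _ (hPN_memLp Wbar)
    exact ⟨_, discreteCollocationOp_of_collocationOp_ae_eq hnodes hw⟩
  refine ⟨⟨hinjS, hsurjS⟩, fun Wbar => ⟨?_, fun what hwhat What hWhat => ?_⟩⟩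
  · obtain ⟨W, rfl⟩ := hsurjS Wbar
    exact ⟨PN nodes W, fun t _ => congrFun (collocationOp_PN W) t⟩
  · have hwhatPN : ∀ t ∈ Icc 0 h,
        what t = PN nodes (fun i => Wbar i + FVp d τ s C what (nodes i)) t :=
      fun t ht => eq_PN_of_collocationOp_eq (hwhat t ht)
    have hWhat_eq : What = fun i => Wbar i + FVp d τ s C what (nodes i) :=
      hinjS ((funext hWhat).trans (discreteCollocationOp_of_collocationOp_ae_eq hnodes
        ((ae_restrict_iff' measurableSet_Icc).2 (ae_of_all _ hwhat))).symm)
    subst hWhat_eq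
    exact ⟨fun i => by rw [hwhatPN _ (hmem i), PN_apply_node hinj], hwhatPN⟩

/-- Assume H1 and H2. If the operator `I_{X⁺} − L_N⁺ F V⁺ : X⁺ → X⁺` is
invertible, then the finite-dimensional operator `I_{X_N⁺} − R_N⁺ F V⁺ P_N⁺` is invertible.
Moreover, given `W̄ ∈ X_N⁺`, the unique solution `ŵ ∈ X⁺` of
`(I − L_N⁺ F V⁺) w = P_N⁺ W̄` and the unique solution `Ŵ ∈ X_N⁺` of
`(I − R_N⁺ F V⁺ P_N⁺) W = W̄` are related by `Ŵ = R_N⁺ ŵ` and `ŵ = P_N⁺ Ŵ`. -/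
theorem discrete_vs_continuous_collocation
    (d : ℕ) (hd : 0 < d) (τ h s : ℝ) (hτ : 0 < τ) (hh : 0 < h)
    (N : ℕ) (hN : 0 < N)
    (C : ℝ → ℝ → Mtx d)
    (hCmeas : StronglyMeasurable (Function.uncurry C))
    -- Hypothesis H1: C ∈ L^∞([s,s+h]×[−τ,0], ℝ^{d×d})
    (hH1 : MemLp (Function.uncurry C) ⊤
      (volume.restrict (Set.Icc s (s+h) ×ˢ Set.Icc (-τ) (0:ℝ))))
    -- Hypothesis H2: F V⁺ : X⁺ → X⁺ has range in H¹ and is bounded as X⁺ → H¹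
    (hH2 : ∃ b : ℝ, ∀ w : ℝ → Evec d,
      MemLp w 2 (volume.restrict (Set.Icc (0:ℝ) h)) →
      H1BddBy d h (FVp d τ s C w)
        (b * (eLpNorm w 2 (volume.restrict (Set.Icc (0:ℝ) h))).toReal))
    -- the collocation nodes are the zeros of the Legendre polynomial of degree N
    -- rescaled to [0,h]
    (nodes : Fin N → ℝ) (hmono : StrictMono nodes)
    (hmem : ∀ i, nodes i ∈ Set.Icc (0:ℝ) h)
    (hzero : ∀ i, (leg N).eval (2 * nodes i / h - 1) = 0)
    -- the operator I_{X⁺} − L_N⁺ F V⁺ : X⁺ → X⁺ is invertible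
    (hinv : ∀ f : ℝ → Evec d, MemLp f 2 (volume.restrict (Set.Icc (0:ℝ) h)) →
      ∃ w : ℝ → Evec d, MemLp w 2 (volume.restrict (Set.Icc (0:ℝ) h)) ∧
        ((fun t => w t - LN nodes (FVp d τ s C w) t)
          =ᵐ[volume.restrict (Set.Icc (0:ℝ) h)] f) ∧
        ∀ w' : ℝ → Evec d, MemLp w' 2 (volume.restrict (Set.Icc (0:ℝ) h)) →
          ((fun t => w' t - LN nodes (FVp d τ s C w') t)
            =ᵐ[volume.restrict (Set.Icc (0:ℝ) h)] f) →
          w' =ᵐ[volume.restrict (Set.Icc (0:ℝ) h)] w) :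
    -- the operator I_{X_N⁺} − R_N⁺ F V⁺ P_N⁺ : X_N⁺ → X_N⁺ is invertible
    Function.Bijective
      (fun W : Fin N → Evec d =>
        (fun i => W i - FVp d τ s C (PN nodes W) (nodes i))) ∧
    -- relation between the continuous and discrete solutions
    ∀ Wbar : Fin N → Evec d,
      (∃ what : ℝ → Evec d, ∀ t ∈ Set.Icc (0:ℝ) h,
        what t - LN nodes (FVp d τ s C what) t = PN nodes Wbar t) ∧
      (∀ what : ℝ → Evec d,
        (∀ t ∈ Set.Icc (0:ℝ) h,
          what t - LN nodes (FVp d τ s C what) t = PN nodes Wbar t) →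
        ∀ What : Fin N → Evec d,
          (∀ i, What i - FVp d τ s C (PN nodes What) (nodes i) = Wbar i) →
          (∀ i, What i = what (nodes i)) ∧
          (∀ t ∈ Set.Icc (0:ℝ) h, what t = PN nodes What t)) :=
  discrete_vs_continuous_collocation_general d τ h s hh N C nodes hmono hmem hinv
end
end
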